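/- arXiv:2002.09512 — 3 statements merged into one kernel-verified Lean document; each statement's English description precedes it below -/
import Mathlib

section
/- Let v be a speed law with maximal speed V_max and let ℓ > 0. Fix n ≥ 1 and initial positions x^o_1, …, x^o_n ∈ ℝ with x^o_{α-1} − x^o_α ≥ ℓ for every α ∈ {2, …, n}. Then the Follow-the-Leader Cauchy problem ẋ_1(t) = V_max, ẋ_α(t) = F(x_{α-1}(t) − x_α(t)) for α ∈ {2, …, n}, x_α(0) = x^o_α, where F(Δ) = v(ℓ/Δ) for Δ > 0 and F(Δ) = 0 for Δ ≤ 0, admits a unique continuously differentiable solution x : [0, ∞) → ℝⁿ. -/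
/-- A speed law: Lipschitz with constant `K`, valued in `[0, Vmax]` on `[0,∞)`,
(weakly) decreasing, and vanishing for densities `ρ ≥ 1`. -/
def IsSpeedLaw (v : ℝ → ℝ) (K Vmax : ℝ) : Prop :=
  0 < Vmax ∧
  (∀ a b : ℝ, |v a - v b| ≤ K * |a - b|) ∧
  (∀ a b : ℝ, a ≤ b → v b ≤ v a) ∧
  (∀ ρ : ℝ, 0 ≤ ρ → 0 ≤ v ρ ∧ v ρ ≤ Vmax) ∧
  (∀ ρ : ℝ, 1 ≤ ρ → v ρ = 0)

/-- The Follow-the-Leader speed as a function of the headway `Δ`: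
`F Δ = v (ℓ / Δ)` for `Δ > 0`, and `F Δ = 0` for `Δ ≤ 0`. -/
noncomputable def FtLSpeed (v : ℝ → ℝ) (ℓ Δ : ℝ) : ℝ :=
  if 0 < Δ then v (ℓ / Δ) else 0

/-- The index of the vehicle immediately in front of vehicle `α` (for `α.val > 0`). -/
def predIdx {n : ℕ} (α : Fin n) : Fin n :=
  ⟨α.val - 1, Nat.lt_of_le_of_lt (Nat.sub_le _ _) α.isLt⟩

/-- `x : ℝ → Fin n → ℝ` solves the Follow-the-Leader system on `[0, ∞)`:
the leader (index `0`) drives at speed `Vmax`, and each follower `α` drives at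
speed `FtLSpeed v ℓ (x (α-1) - x α)`. -/
def IsFtLSolution (v : ℝ → ℝ) (Vmax ℓ : ℝ) {n : ℕ} (hn : 0 < n)
    (x : ℝ → Fin n → ℝ) : Prop :=
  ∀ t ∈ Set.Ici (0 : ℝ),
    HasDerivWithinAt (fun s => x s ⟨0, hn⟩) Vmax (Set.Ici 0) t ∧
    ∀ α : Fin n, 0 < α.val →
      HasDerivWithinAt (fun s => x s α)
        (FtLSpeed v ℓ (x t (predIdx α) - x t α)) (Set.Ici 0) t

/-!
Below one vehicle length the density `ℓ / Δ` is at least `1`, so the speed vanishes and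
`F Δ = v (ℓ / max Δ ℓ)`. As `Δ ↦ ℓ / max Δ ℓ` is `ℓ⁻¹`-Lipschitz, `F` is globally Lipschitz and
bounded by `V_max`, hence so is the right-hand side of the whole system in the sup norm on `ℝⁿ`.
For an autonomous ODE with a bounded, globally Lipschitz right-hand side, Picard–Lindelöf gives
solutions on every bounded interval, and the Grönwall uniqueness theorem makes them agree, so
they glue to the unique solution on `[0, ∞)`.
-/

open Set Filter Topology NNReal

section AutonomousODE

variable {E : Type*} [NormedAddCommGroup E] [NormedSpace ℝ E] {f : E → E} {K : ℝ≥0}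

theorem eqOn_Icc_of_hasDerivWithinAt (hf : LipschitzWith K f) {T : ℝ} {x y : ℝ → E}
    (hx : ∀ t ∈ Icc 0 T, HasDerivWithinAt x (f (x t)) (Icc 0 T) t)
    (hy : ∀ t ∈ Icc 0 T, HasDerivWithinAt y (f (y t)) (Icc 0 T) t) (h0 : x 0 = y 0) :
    EqOn x y (Icc 0 T) :=
  ODE_solution_unique (v := fun _ ↦ f) (fun _ ↦ hf)
    (fun t ht ↦ (hx t ht).continuousWithinAt)
    (fun t ht ↦ (hx t (Ico_subset_Icc_self ht)).mono_of_mem_nhdsWithin (Icc_mem_nhdsGE_of_mem ht))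
    (fun t ht ↦ (hy t ht).continuousWithinAt)
    (fun t ht ↦ (hy t (Ico_subset_Icc_self ht)).mono_of_mem_nhdsWithin (Icc_mem_nhdsGE_of_mem ht))
    h0

theorem eqOn_Ici_of_hasDerivWithinAt (hf : LipschitzWith K f) {x y : ℝ → E}
    (hx : ∀ t ∈ Ici (0 : ℝ), HasDerivWithinAt x (f (x t)) (Ici 0) t)
    (hy : ∀ t ∈ Ici (0 : ℝ), HasDerivWithinAt y (f (y t)) (Ici 0) t) (h0 : x 0 = y 0) :
    EqOn x y (Ici 0) := fun _ hT ↦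
  eqOn_Icc_of_hasDerivWithinAt hf (fun t ht ↦ (hx t ht.1).mono Icc_subset_Ici_self)
    (fun t ht ↦ (hy t ht.1).mono Icc_subset_Ici_self) h0 ⟨hT, le_rfl⟩

variable [CompleteSpace E]

theorem exists_forall_Icc_hasDerivWithinAt (hf : LipschitzWith K f) {L : ℝ≥0}
    (hL : ∀ x, ‖f x‖ ≤ L) (x₀ : E) (T : ℝ≥0) :
    ∃ x : ℝ → E, x 0 = x₀ ∧ ∀ t ∈ Icc 0 (T : ℝ), HasDerivWithinAt x (f (x t)) (Icc 0 T) t :=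
  (IsPicardLindelof.of_time_independent (t₀ := ⟨0, le_rfl, T.2⟩) (x₀ := x₀) (a := L * T) (r := 0)
    (fun x _ ↦ hL x) hf.lipschitzOnWith (by simp)).exists_eq_forall_mem_Icc_hasDerivWithinAt₀

theorem exists_forall_Ici_hasDerivWithinAt (hf : LipschitzWith K f) {L : ℝ≥0}
    (hL : ∀ x, ‖f x‖ ≤ L) (x₀ : E) :
    ∃ x : ℝ → E, x 0 = x₀ ∧ ∀ t ∈ Ici (0 : ℝ), HasDerivWithinAt x (f (x t)) (Ici 0) t := by
  choose sol hsol0 hsol using fun N : ℕ ↦ exists_forall_Icc_hasDerivWithinAt hf hL x₀ N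
  have hagree (M N : ℕ) : EqOn (sol M) (sol N) (Icc 0 (min M N : ℝ)) :=
    eqOn_Icc_of_hasDerivWithinAt hf
      (fun t ht ↦ (hsol M t (Icc_subset_Icc_right (min_le_left _ _) ht)).mono
        (Icc_subset_Icc_right (min_le_left _ _)))
      (fun t ht ↦ (hsol N t (Icc_subset_Icc_right (min_le_right _ _) ht)).mono
        (Icc_subset_Icc_right (min_le_right _ _)))
      ((hsol0 M).trans (hsol0 N).symm)
  refine ⟨fun t ↦ sol (⌈t⌉₊ + 1) t, by simpa using hsol0 1, fun t ht ↦ ?_⟩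
  set N := ⌈t⌉₊ + 1
  have htN : t < N := by push_cast [N]; linarith [Nat.le_ceil t]
  have hS : Ici 0 ∩ Iio (N : ℝ) ∈ 𝓝[Ici 0] t := inter_mem_nhdsWithin _ (Iio_mem_nhds htN)
  have heq : ∀ s ∈ Ici 0 ∩ Iio (N : ℝ), sol (⌈s⌉₊ + 1) s = sol N s := fun s hs ↦
    hagree _ _ ⟨hs.1, le_min (by push_cast; linarith [Nat.le_ceil s]) hs.2.le⟩
  have hder := (hsol N t ⟨ht, htN.le⟩).mono_of_mem_nhdsWithin
    (mem_of_superset hS fun s hs ↦ ⟨hs.1, hs.2.le⟩)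
  convert hder.congr_of_eventuallyEq (eventually_of_mem hS heq) (heq t ⟨ht, htN⟩) using 2

end AutonomousODE

section SpeedLaw

variable {v : ℝ → ℝ} {K Vmax ℓ : ℝ}

theorem IsSpeedLaw.lipschitzWith (hv : IsSpeedLaw v K Vmax) : LipschitzWith K.toNNReal v :=
  LipschitzWith.of_dist_le' fun a b ↦ hv.2.1 a b

theorem FtLSpeed_eq_max (hℓ : 0 < ℓ) (hv : IsSpeedLaw v K Vmax) (Δ : ℝ) :
    FtLSpeed v ℓ Δ = v (ℓ / max Δ ℓ) := by
  rcases le_or_gt Δ ℓ with h | h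
  · rw [max_eq_right h, div_self hℓ.ne', hv.2.2.2.2 1 le_rfl, FtLSpeed]
    split_ifs with hΔ
    · exact hv.2.2.2.2 _ ((one_le_div hΔ).2 h)
    · rfl
  · rw [max_eq_left h.le, FtLSpeed, if_pos (hℓ.trans h)]

theorem lipschitzWith_div_max (hℓ : 0 < ℓ) :
    LipschitzWith ℓ⁻¹.toNNReal fun Δ : ℝ ↦ ℓ / max Δ ℓ := by
  refine LipschitzWith.of_dist_le' fun a b ↦ ?_
  set a' := max a ℓ
  set b' := max b ℓ
  have ha' : ℓ ≤ a' := le_max_right _ _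
  have hb' : ℓ ≤ b' := le_max_right _ _
  have hsub : ℓ / a' - ℓ / b' = ℓ / (a' * b') * (b' - a') := by
    field_simp [(hℓ.trans_le ha').ne', (hℓ.trans_le hb').ne']
  calc dist (ℓ / a') (ℓ / b') = ℓ / (a' * b') * |a' - b'| := by
        rw [Real.dist_eq, hsub, abs_mul, abs_of_pos (by positivity), abs_sub_comm]
    _ ≤ ℓ⁻¹ * dist a b := by
        gcongr
        · rw [div_le_iff₀ (by positivity), inv_mul_eq_div, le_div_iff₀ hℓ]
          nlinarith
        · exact abs_max_sub_max_le_abs a b ℓ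

theorem FtLSpeed_lipschitzWith (hℓ : 0 < ℓ) (hv : IsSpeedLaw v K Vmax) :
    LipschitzWith (K.toNNReal * ℓ⁻¹.toNNReal) (FtLSpeed v ℓ) := by
  rw [funext (FtLSpeed_eq_max hℓ hv)]
  exact hv.lipschitzWith.comp (lipschitzWith_div_max hℓ)

theorem FtLSpeed_mem_Icc (hℓ : 0 < ℓ) (hv : IsSpeedLaw v K Vmax) (Δ : ℝ) :
    FtLSpeed v ℓ Δ ∈ Icc 0 Vmax := by
  rw [FtLSpeed_eq_max hℓ hv]
  exact hv.2.2.2.1 _ (by positivity)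

end SpeedLaw

noncomputable def ftlField (v : ℝ → ℝ) (Vmax ℓ : ℝ) {n : ℕ} (x : Fin n → ℝ) : Fin n → ℝ :=
  fun α ↦ if (α : ℕ) = 0 then Vmax else FtLSpeed v ℓ (x (predIdx α) - x α)

section FtLField

variable {v : ℝ → ℝ} {K Vmax ℓ : ℝ} {n : ℕ}

theorem ftlField_lipschitzWith (hℓ : 0 < ℓ) (hv : IsSpeedLaw v K Vmax) :
    LipschitzWith (K.toNNReal * ℓ⁻¹.toNNReal * 2) (ftlField v Vmax ℓ (n := n)) := by
  refine LipschitzWith.of_dist_le_mul fun x y ↦ (dist_pi_le_iff (by positivity)).2 fun α ↦ ?_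
  by_cases hα : (α : ℕ) = 0
  · simp only [ftlField, hα, if_true, dist_self]
    positivity
  · have hheadway : LipschitzWith 2 fun x : Fin n → ℝ ↦ x (predIdx α) - x α :=
      one_add_one_eq_two (R := ℝ≥0) ▸ (LipschitzWith.eval _).sub (LipschitzWith.eval _)
    simp only [ftlField, hα, if_false]
    exact ((FtLSpeed_lipschitzWith hℓ hv).comp hheadway).dist_le_mul x y

theorem norm_ftlField_le (hℓ : 0 < ℓ) (hv : IsSpeedLaw v K Vmax) (x : Fin n → ℝ) :
    ‖ftlField v Vmax ℓ x‖ ≤ Vmax.toNNReal := by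
  rw [Real.coe_toNNReal _ hv.1.le, pi_norm_le_iff_of_nonneg hv.1.le]
  intro α
  by_cases hα : (α : ℕ) = 0
  · simp [ftlField, hα, abs_of_pos hv.1]
  · obtain ⟨hlo, hhi⟩ := FtLSpeed_mem_Icc hℓ hv (x (predIdx α) - x α)
    simpa [ftlField, hα, abs_of_nonneg hlo] using hhi

theorem isFtLSolution_iff (hn : 0 < n) {x : ℝ → Fin n → ℝ} :
    IsFtLSolution v Vmax ℓ hn x ↔
      ∀ t ∈ Ici (0 : ℝ), HasDerivWithinAt x (ftlField v Vmax ℓ (x t)) (Ici 0) t := by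
  refine forall₂_congr fun t _ ↦ ?_
  rw [hasDerivWithinAt_pi]
  constructor
  · rintro ⟨hleader, hfollower⟩ α
    by_cases hα : (α : ℕ) = 0
    · obtain rfl : α = ⟨0, hn⟩ := Fin.ext hα
      simpa [ftlField] using hleader
    · simpa [ftlField, hα] using hfollower α (Nat.pos_of_ne_zero hα)
  · intro h
    exact ⟨by simpa [ftlField] using h ⟨0, hn⟩, fun α hα ↦ by simpa [ftlField, hα.ne'] using h α⟩

end FtLField

theorem stmt1_general (v : ℝ → ℝ) (K Vmax ℓ : ℝ) (hℓ : 0 < ℓ)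
    (hv : IsSpeedLaw v K Vmax)
    (n : ℕ) (hn : 0 < n) (x0 : Fin n → ℝ) :
    ∃ x : ℝ → Fin n → ℝ,
      ((∀ α, x 0 α = x0 α) ∧ IsFtLSolution v Vmax ℓ hn x) ∧
      ∀ y : ℝ → Fin n → ℝ,
        ((∀ α, y 0 α = x0 α) ∧ IsFtLSolution v Vmax ℓ hn y) →
        ∀ t ∈ Set.Ici (0 : ℝ), y t = x t := by
  have hlip := ftlField_lipschitzWith (n := n) hℓ hv
  obtain ⟨x, hx0, hx⟩ := exists_forall_Ici_hasDerivWithinAt hlip (norm_ftlField_le hℓ hv) x0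
  refine ⟨x, ⟨fun α ↦ by rw [hx0], (isFtLSolution_iff hn).2 hx⟩, ?_⟩
  rintro y ⟨hy0, hy⟩ t ht
  exact eqOn_Ici_of_hasDerivWithinAt hlip ((isFtLSolution_iff hn).1 hy) hx
    (funext fun α ↦ by rw [hy0, hx0]) ht

theorem stmt1 (v : ℝ → ℝ) (K Vmax ℓ : ℝ) (hℓ : 0 < ℓ)
    (hv : IsSpeedLaw v K Vmax)
    (n : ℕ) (hn : 0 < n) (x0 : Fin n → ℝ)
    (hspacing : ∀ α : Fin n, 0 < α.val → x0 (predIdx α) - x0 α ≥ ℓ) :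
    ∃ x : ℝ → Fin n → ℝ,
      ((∀ α, x 0 α = x0 α) ∧ IsFtLSolution v Vmax ℓ hn x) ∧
      ∀ y : ℝ → Fin n → ℝ,
        ((∀ α, y 0 α = x0 α) ∧ IsFtLSolution v Vmax ℓ hn y) →
        ∀ t ∈ Set.Ici (0 : ℝ), y t = x t :=
  stmt1_general v K Vmax ℓ hℓ hv n hn x0
end

section
/- Let v be a speed law with maximal speed V_max and let ℓ > 0. Let x : [0, ∞) → ℝⁿ solve the Follow-the-Leader system ẋ_1 = V_max, ẋ_α = F(x_{α-1} − x_α) for α ∈ {2, …, n} (with F(Δ) = v(ℓ/Δ) for Δ > 0 and F(Δ) = 0 for Δ ≤ 0), with initial data satisfying x_{α-1}(0) − x_α(0) ≥ ℓ for all α ∈ {2, …, n}. Then for every t ≥ 0 and every α ∈ {2, …, n}, x_{α-1}(t) − x_α(t) ≥ ℓ. In particular no collision ever occurs and the strict ordering x_n(t) < x_{n-1}(t) < … < x_1(t) is preserved for all t ≥ 0. -/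
/-! The headway `x_{α-1} - x_α` of every follower is differentiable from the right with derivative
`ẋ_{α-1} - F(x_{α-1} - x_α)`. All speeds are nonnegative, and `F` vanishes on headways `≤ ℓ`, so
the derivative of the headway is nonnegative whenever the headway is below `ℓ`. A fencing argument
(comparison with `ℓ - ε (1 + s)` for every `ε > 0`) then keeps the headway above `ℓ` forever. -/

open Set

theorem le_image_of_deriv_right_nonneg_of_lt {f : ℝ → ℝ} {a b ℓ : ℝ}
    (hf : ContinuousOn f (Icc a b))
    (hf' : ∀ x ∈ Ico a b, ∃ f', HasDerivWithinAt f f' (Ici x) x ∧ (f x < ℓ → 0 ≤ f'))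
    (ha : ℓ ≤ f a) : ∀ ⦃x⦄, x ∈ Icc a b → ℓ ≤ f x := by
  choose! f' hderiv hnonneg using hf'
  intro x hx
  have hxa : 0 < x - a + 1 := by linarith [hx.1]
  refine le_of_forall_pos_le_add fun δ hδ => ?_
  set ε := δ / (x - a + 1)
  have hε : 0 < ε := div_pos hδ hxa
  -- The fencing theorem needs a strict inequality at contact points, hence the slack `ε`.
  have fence : ℓ - ε * (x - a + 1) ≤ f x := by
    refine image_le_of_deriv_right_lt_deriv_boundary' (f := fun s => ℓ - ε * (s - a + 1))
      (f' := fun _ => -ε) ?_ ?_ ?_ hf hderiv ?_ hx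
    · fun_prop
    · intro s _
      simpa using ((hasDerivAt_id s).sub_const a |>.add_const 1 |>.const_mul ε
        |>.const_sub ℓ).hasDerivWithinAt
    · simp only [sub_self, zero_add, mul_one]
      linarith
    · intro s hs hfs
      have hlt : f s < ℓ := by nlinarith [hs.1]
      linarith [hnonneg s hs hlt]
  have : ε * (x - a + 1) = δ := div_mul_cancel₀ δ hxa.ne'
  linarith

theorem FtLSpeed_nonneg {v : ℝ → ℝ} {K Vmax ℓ : ℝ} (hℓ : 0 ≤ ℓ) (hv : IsSpeedLaw v K Vmax)
    (Δ : ℝ) : 0 ≤ FtLSpeed v ℓ Δ := by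
  unfold FtLSpeed
  split_ifs with hΔ
  · exact (hv.2.2.2.1 _ (div_nonneg hℓ hΔ.le)).1
  · exact le_rfl

theorem FtLSpeed_eq_zero_of_le {v : ℝ → ℝ} {K Vmax ℓ Δ : ℝ} (hv : IsSpeedLaw v K Vmax)
    (hΔ : Δ ≤ ℓ) : FtLSpeed v ℓ Δ = 0 := by
  unfold FtLSpeed
  split_ifs with hpos
  · exact hv.2.2.2.2 _ ((one_le_div hpos).mpr hΔ)
  · rfl

namespace IsFtLSolution

variable {v : ℝ → ℝ} {K Vmax ℓ : ℝ} {n : ℕ} {hn : 0 < n} {x : ℝ → Fin n → ℝ}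

theorem exists_hasDerivWithinAt_nonneg (hsol : IsFtLSolution v Vmax ℓ hn x) (hℓ : 0 ≤ ℓ)
    (hv : IsSpeedLaw v K Vmax) {t : ℝ} (ht : t ∈ Ici 0) (β : Fin n) :
    ∃ c, 0 ≤ c ∧ HasDerivWithinAt (fun s => x s β) c (Ici 0) t := by
  rcases Nat.eq_zero_or_pos β.val with hβ | hβ
  · obtain rfl : β = ⟨0, hn⟩ := Fin.ext hβ
    exact ⟨Vmax, hv.1.le, (hsol t ht).1⟩
  · exact ⟨_, FtLSpeed_nonneg hℓ hv _, (hsol t ht).2 β hβ⟩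

theorem exists_hasDerivWithinAt_headway (hsol : IsFtLSolution v Vmax ℓ hn x) (hℓ : 0 ≤ ℓ)
    (hv : IsSpeedLaw v K Vmax) {t : ℝ} (ht : t ∈ Ici 0) {α : Fin n} (hα : 0 < α.val) :
    ∃ c, 0 ≤ c ∧ HasDerivWithinAt (fun s => x s (predIdx α) - x s α)
      (c - FtLSpeed v ℓ (x t (predIdx α) - x t α)) (Ici 0) t := by
  obtain ⟨c, hc, hpred⟩ := hsol.exists_hasDerivWithinAt_nonneg hℓ hv ht (predIdx α)
  exact ⟨c, hc, hpred.sub ((hsol t ht).2 α hα)⟩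

theorem le_headway (hsol : IsFtLSolution v Vmax ℓ hn x) (hℓ : 0 ≤ ℓ)
    (hv : IsSpeedLaw v K Vmax) {α : Fin n} (hα : 0 < α.val) (h0 : ℓ ≤ x 0 (predIdx α) - x 0 α)
    {t : ℝ} (ht : t ∈ Ici 0) : ℓ ≤ x t (predIdx α) - x t α := by
  have hcont : ContinuousOn (fun s => x s (predIdx α) - x s α) (Icc 0 t) := fun s hs => by
    obtain ⟨c, -, hd⟩ := hsol.exists_hasDerivWithinAt_headway hℓ hv hs.1 hα
    exact hd.continuousWithinAt.mono Icc_subset_Ici_self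
  refine le_image_of_deriv_right_nonneg_of_lt hcont (fun s hs => ?_) h0 ⟨ht, le_rfl⟩
  obtain ⟨c, hc, hd⟩ := hsol.exists_hasDerivWithinAt_headway hℓ hv hs.1 hα
  refine ⟨_, hd.mono (Ici_subset_Ici.mpr hs.1), fun hlt => ?_⟩
  rw [FtLSpeed_eq_zero_of_le hv hlt.le, sub_zero]
  exact hc

end IsFtLSolution

theorem stmt2 (v : ℝ → ℝ) (K Vmax ℓ : ℝ) (hℓ : 0 < ℓ)
    (hv : IsSpeedLaw v K Vmax)
    (n : ℕ) (hn : 0 < n) (x : ℝ → Fin n → ℝ)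
    (hsol : IsFtLSolution v Vmax ℓ hn x)
    (hspacing0 : ∀ α : Fin n, 0 < α.val → x 0 (predIdx α) - x 0 α ≥ ℓ) :
    ∀ t ∈ Set.Ici (0 : ℝ), ∀ α : Fin n, 0 < α.val →
      x t (predIdx α) - x t α ≥ ℓ ∧ x t α < x t (predIdx α) := by
  intro t ht α hα
  have h := hsol.le_headway hℓ.le hv hα (hspacing0 α hα) ht
  exact ⟨h, by linarith⟩
end

section
/- Consider the three-route Braess routing game with 4000 players and routes {A, B, C}, with travel times c_A = (n_A + n_C)/100 + 45, c_B = 45 + (n_B + n_C)/100, c_C = (n_A + n_C)/100 + (n_B + n_C)/100. Then a strategy profile is a Nash equilibrium if and only if every player chooses route C; in particular the Nash equilibrium is unique and in it every player's travel time equals 80. -/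
set_option maxRecDepth 10000


/-- Number of players choosing route `r` in profile `s`.
Routes: `0` = route A (roads 3,6), `1` = route B (roads 2,5), `2` = route C (roads 3,4,5). -/
def threeCount (s : Fin 4000 → Fin 3) (r : Fin 3) : ℕ :=
  (Finset.univ.filter fun i => s i = r).card

/-- Travel time of route `r` under profile `s`:
`c_A = (n_A + n_C)/100 + 45`, `c_B = 45 + (n_B + n_C)/100`,
`c_C = (n_A + n_C)/100 + (n_B + n_C)/100`. -/
noncomputable def threeRouteCost (s : Fin 4000 → Fin 3) (r : Fin 3) : ℝ :=
  if r = 0 then ((threeCount s 0 : ℝ) + (threeCount s 2 : ℝ)) / 100 + 45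
  else if r = 1 then 45 + ((threeCount s 1 : ℝ) + (threeCount s 2 : ℝ)) / 100
  else ((threeCount s 0 : ℝ) + (threeCount s 2 : ℝ)) / 100
       + ((threeCount s 1 : ℝ) + (threeCount s 2 : ℝ)) / 100

/-- Travel time of player `i` under profile `s`. -/
noncomputable def threeCost (s : Fin 4000 → Fin 3) (i : Fin 4000) : ℝ :=
  threeRouteCost s (s i)

/-- Nash equilibrium: no player can strictly decrease his/her travel time by
unilaterally changing route. -/
def IsNashThree (s : Fin 4000 → Fin 3) : Prop :=
  ∀ i : Fin 4000, ∀ r : Fin 3, threeCost s i ≤ threeCost (Function.update s i r) i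

lemma countSum (s : Fin 4000 → Fin 3) :
    threeCount s 0 + threeCount s 1 + threeCount s 2 = 4000 := by
  classical
  have h := Finset.card_eq_sum_card_fiberwise
    (s := (Finset.univ : Finset (Fin 4000))) (t := (Finset.univ : Finset (Fin 3)))
    (f := s) (fun x _ => Finset.mem_univ _)
  rw [Finset.card_univ, Fintype.card_fin, Fin.sum_univ_three] at h
  simpa [threeCount] using h.symm

lemma countUpdate (s : Fin 4000 → Fin 3) (i : Fin 4000) (r t : Fin 3) :
    threeCount (Function.update s i r) t + (if s i = t then 1 else 0)
      = threeCount s t + (if r = t then 1 else 0) := by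
  classical
  unfold threeCount
  rw [Finset.card_filter, Finset.card_filter]
  have key : (fun j => if Function.update s i r j = t then (1:ℕ) else 0)
      = Function.update (fun j => if s j = t then (1:ℕ) else 0) i (if r = t then 1 else 0) := by
    funext j
    by_cases h : j = i <;> simp [Function.update, h]
  rw [key, Finset.sum_update_of_mem (Finset.mem_univ i)]
  rw [Finset.sum_eq_sum_sdiff_singleton_add (Finset.mem_univ i)
    (fun j => if s j = t then (1:ℕ) else 0)]
  omega

lemma countPos (s : Fin 4000 → Fin 3) (i : Fin 4000) : 1 ≤ threeCount s (s i) := by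
  have : i ∈ Finset.univ.filter fun j => s j = s i := by simp
  exact Finset.card_pos.mpr ⟨i, this⟩

lemma fin3cases : ∀ x : Fin 3, x = 0 ∨ x = 1 ∨ x = 2 := by decide

lemma allTwoCost (s : Fin 4000 → Fin 3) (hall : ∀ i, s i = 2) :
    ∀ i, threeCost s i = 80 := by
  intro i
  have h0 : threeCount s 0 = 0 := by simp [threeCount, hall]
  have h1 : threeCount s 1 = 0 := by simp [threeCount, hall]
  have h2 : threeCount s 2 = 4000 := by have := countSum s; omega
  rw [threeCost, hall i]
  simp [threeRouteCost, h0, h1, h2]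
  norm_num

lemma fwdDir (s : Fin 4000 → Fin 3) (h : IsNashThree s) : ∀ i, s i = 2 := by
  intro i
  rcases fin3cases (s i) with h0 | h1 | h2
  · exfalso
    have hn := h i 2
    have e0 := countUpdate s i 2 0
    have e1 := countUpdate s i 2 1
    have e2 := countUpdate s i 2 2
    rw [h0] at e0 e1 e2
    simp only [if_pos rfl] at e0
    norm_num [show (2:Fin 3) ≠ 0 by decide, show (2:Fin 3) ≠ 1 by decide, show (0:Fin 3) ≠ 2 by decide, show (1:Fin 3) ≠ 2 by decide, show (0:Fin 3) ≠ 1 by decide, show (1:Fin 3) ≠ 0 by decide] at e0 e1 e2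
    have hpos : 1 ≤ threeCount s 0 := h0 ▸ countPos s i
    have hsum := countSum s
    have hcost : threeCost s i = ((threeCount s 0 : ℝ) + threeCount s 2) / 100 + 45 := by
      rw [threeCost, h0]; simp [threeRouteCost]
    have hcost' : threeCost (Function.update s i 2) i
        = ((threeCount (Function.update s i 2) 0 : ℝ) + threeCount (Function.update s i 2) 2) / 100
          + ((threeCount (Function.update s i 2) 1 : ℝ) + threeCount (Function.update s i 2) 2) / 100 := by
      rw [threeCost, Function.update_self]; simp [threeRouteCost]
    rw [hcost, hcost'] at hn
    have re0 : (threeCount (Function.update s i 2) 0 : ℝ) + 1 = threeCount s 0 := by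
      exact_mod_cast e0
    have re1 : (threeCount (Function.update s i 2) 1 : ℝ) = threeCount s 1 := by
      exact_mod_cast e1
    have re2 : (threeCount (Function.update s i 2) 2 : ℝ) = (threeCount s 2 : ℝ) + 1 := by
      exact_mod_cast e2
    have rsum : (threeCount s 0 : ℝ) + threeCount s 1 + threeCount s 2 = 4000 := by
      exact_mod_cast hsum
    have rpos : (1:ℝ) ≤ threeCount s 0 := by exact_mod_cast hpos
    linarith
  · exfalso
    have hn := h i 2
    have e0 := countUpdate s i 2 0
    have e1 := countUpdate s i 2 1
    have e2 := countUpdate s i 2 2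
    rw [h1] at e0 e1 e2
    norm_num [show (2:Fin 3) ≠ 0 by decide, show (2:Fin 3) ≠ 1 by decide, show (0:Fin 3) ≠ 2 by decide, show (1:Fin 3) ≠ 2 by decide, show (0:Fin 3) ≠ 1 by decide, show (1:Fin 3) ≠ 0 by decide] at e0 e1 e2
    have hpos : 1 ≤ threeCount s 1 := h1 ▸ countPos s i
    have hsum := countSum s
    have hcost : threeCost s i = 45 + ((threeCount s 1 : ℝ) + threeCount s 2) / 100 := by
      rw [threeCost, h1]; simp [threeRouteCost]
    have hcost' : threeCost (Function.update s i 2) i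
        = ((threeCount (Function.update s i 2) 0 : ℝ) + threeCount (Function.update s i 2) 2) / 100
          + ((threeCount (Function.update s i 2) 1 : ℝ) + threeCount (Function.update s i 2) 2) / 100 := by
      rw [threeCost, Function.update_self]; simp [threeRouteCost]
    rw [hcost, hcost'] at hn
    have re0 : (threeCount (Function.update s i 2) 0 : ℝ) = threeCount s 0 := by
      exact_mod_cast e0
    have re1 : (threeCount (Function.update s i 2) 1 : ℝ) + 1 = threeCount s 1 := by
      exact_mod_cast e1
    have re2 : (threeCount (Function.update s i 2) 2 : ℝ) = (threeCount s 2 : ℝ) + 1 := by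
      exact_mod_cast e2
    have rsum : (threeCount s 0 : ℝ) + threeCount s 1 + threeCount s 2 = 4000 := by
      exact_mod_cast hsum
    have rpos : (1:ℝ) ≤ threeCount s 1 := by exact_mod_cast hpos
    linarith
  · exact h2

lemma bwdDir (s : Fin 4000 → Fin 3) (hall : ∀ i, s i = 2) : IsNashThree s := by
  intro i r
  rw [allTwoCost s hall i]
  have h0 : threeCount s 0 = 0 := by simp [threeCount, hall]
  have h1 : threeCount s 1 = 0 := by simp [threeCount, hall]
  have h2 : threeCount s 2 = 4000 := by have := countSum s; omega
  rcases fin3cases r with hr | hr | hr <;> subst hr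
  · have e0 := countUpdate s i 0 0
    have e1 := countUpdate s i 0 1
    have e2 := countUpdate s i 0 2
    rw [hall i] at e0 e1 e2
    norm_num [h0, h1, h2, show (2:Fin 3) ≠ 0 by decide, show (2:Fin 3) ≠ 1 by decide, show (0:Fin 3) ≠ 2 by decide, show (1:Fin 3) ≠ 2 by decide, show (0:Fin 3) ≠ 1 by decide, show (1:Fin 3) ≠ 0 by decide] at e0 e1 e2
    have e2' : threeCount (Function.update s i 0) 2 = 3999 := by omega
    rw [threeCost, Function.update_self]
    simp [threeRouteCost, e0, e2']
    norm_num
  · have e0 := countUpdate s i 1 0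
    have e1 := countUpdate s i 1 1
    have e2 := countUpdate s i 1 2
    rw [hall i] at e0 e1 e2
    norm_num [h0, h1, h2, show (2:Fin 3) ≠ 0 by decide, show (2:Fin 3) ≠ 1 by decide, show (0:Fin 3) ≠ 2 by decide, show (1:Fin 3) ≠ 2 by decide, show (0:Fin 3) ≠ 1 by decide, show (1:Fin 3) ≠ 0 by decide] at e0 e1 e2
    have e2' : threeCount (Function.update s i 1) 2 = 3999 := by omega
    rw [threeCost, Function.update_self]
    simp [threeRouteCost, e1, e2']
    norm_num
  · have hupd : Function.update s i 2 = s := by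
      rw [← hall i]; exact Function.update_eq_self i s
    rw [hupd, allTwoCost s hall i]

theorem stmt9 (s : Fin 4000 → Fin 3) :
    (IsNashThree s ↔ ∀ i : Fin 4000, s i = 2) ∧
    (IsNashThree s → ∀ i : Fin 4000, threeCost s i = 80) := by
  exact ⟨⟨fwdDir s, bwdDir s⟩, fun h => allTwoCost s (fwdDir s h)⟩
end
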